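/- Fix an integer t ≥ 5 and set D(q,w) = 1 − b(q,1,1,w) = Σ_{j≥0} (−1)^j w^j ∏_{i=1}^{j} q^{h_i}/(1−q^{h_i}). On the disc {w ∈ ℂ : |w − 1| ≤ 1/2 − 5·(2/3)^t}, the function q_0(w) defined implicitly by D(q_0(w), w) = 0 together with |q_0(w)| < 2/3 (which exists and is unique) is analytic in w. -/

import Mathlib

open scoped BigOperators
open Filter MeasureTheory

noncomputable section

/-- `hp t j = 1 + t + ⋯ + t^(j-1) = (t^j - 1)/(t-1)`. -/
def hp (t j : ℕ) : ℕ := ∑ i ∈ Finset.range j, t ^ i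

/-- The series `b(q,u,v,w)`
`b = Σ_{j≥1} v q^{h_j} u^{t^j} w^j/(1−q^{h_j} u^{t^j}) ∏_{i=1}^{j−1} (1−v−q^{h_i}u^{t^i})/(1−q^{h_i}u^{t^i})`. -/
def bGF (t : ℕ) (q u v w : ℂ) : ℂ :=
  ∑' j : ℕ,
    v * q ^ hp t (j + 1) * u ^ t ^ (j + 1) * w ^ (j + 1) /
        (1 - q ^ hp t (j + 1) * u ^ t ^ (j + 1)) *
      ∏ i ∈ Finset.Icc 1 j,
        (1 - v - q ^ hp t i * u ^ t ^ i) / (1 - q ^ hp t i * u ^ t ^ i)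

/-- The series `a(q,u,v,w)` (for canonical forests with `r` roots)
`a = Σ_{j≥0} v q^{r h_j} u^{r t^j} w^j ∏_{i=1}^{j} (1−v−q^{h_i}u^{t^i})/(1−q^{h_i}u^{t^i})`. -/
def aGF (t r : ℕ) (q u v w : ℂ) : ℂ :=
  ∑' j : ℕ,
    v * q ^ (r * hp t j) * u ^ (r * t ^ j) * w ^ j *
      ∏ i ∈ Finset.Icc 1 j,
        (1 - v - q ^ hp t i * u ^ t ^ i) / (1 - q ^ hp t i * u ^ t ^ i)

/-- A canonical `t`-ary forest with `r` (ordered) roots, encoded by its sequence of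
numbers of internal vertices on each level (a canonical forest is uniquely determined
by this sequence: on each level the leaves come first, since outdegrees read from left
to right are non-decreasing).  The number `c_0` of internal vertices on level `0` is at
most `r`, each level's internal-vertex count satisfies `1 ≤ c_{k+1} ≤ t·c_k`, and the
list stops at the last level containing internal vertices. -/
structure CanonicalForest (t r : ℕ) where
  levels : List ℕ
  pos : ∀ c ∈ levels, 0 < c
  head_le : ∀ c ∈ levels.head?, c ≤ r
  chain : levels.Chain' fun a b => b ≤ t * a

namespace CanonicalForest

variable {t r : ℕ} (T : CanonicalForest t r)

/-- the number `n(T)` of internal vertices -/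
def size : ℕ := T.levels.sum

/-- the height `h(T)`: the maximal distance of a leaf from the root level -/
def height : ℕ := T.levels.length

/-- the number of internal vertices at depth `k` -/
def internAt (k : ℕ) : ℕ := T.levels.getD k 0

/-- the number of vertices at depth `k` -/
def vertsAt (k : ℕ) : ℕ := if k = 0 then r else t * T.internAt (k - 1)

/-- the number of leaves at depth `k` -/
def leavesAt (k : ℕ) : ℕ := T.vertsAt k - T.internAt k

/-- the number `m(T)` of leaves at maximal depth -/
def lastLeaves : ℕ := T.vertsAt T.height

/-- the number `d(T)` of distinct depths at which leaves occur -/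
def distinctDepths : ℕ :=
  ((Finset.range (T.height + 1)).filter fun k => 0 < T.leavesAt k).card

/-- the (leaf-)width `w(T)`: the maximal number of leaves on one level -/
def width : ℕ := (Finset.range (T.height + 1)).sup fun k => T.leavesAt k

/-- the total path length `ℓ(T)`: the sum of the depths of all vertices -/
def pathLength : ℕ := ∑ k ∈ Finset.range (T.height + 1), k * T.vertsAt k

end CanonicalForest

/-- the number of canonical `t`-ary forests with `r` roots and `n` internal vertices -/
def forestCount (t r n : ℕ) : ℕ := Nat.card {T : CanonicalForest t r // T.size = n}

/-- the probability of an event under the uniform distribution on canonical `t`-ary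
forests with `r` roots and `n` internal vertices -/
def forestProb (t r n : ℕ) (s : Set (CanonicalForest t r)) : ℝ :=
  (Nat.card {T : CanonicalForest t r // T.size = n ∧ T ∈ s} : ℝ) / forestCount t r n

/-- the expectation of a random variable under the uniform distribution on canonical
`t`-ary forests with `r` roots and `n` internal vertices -/
def forestExp (t r n : ℕ) (f : CanonicalForest t r → ℝ) : ℝ :=
  (∑ᶠ T : {T : CanonicalForest t r // T.size = n}, f T.1) / forestCount t r n

/-- the variance of a random variable under the uniform distribution on canonical
`t`-ary forests with `r` roots and `n` internal vertices -/
def forestVar (t r n : ℕ) (f : CanonicalForest t r → ℝ) : ℝ :=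
  forestExp t r n (fun T => f T ^ 2) - forestExp t r n f ^ 2

/-- the distribution function of the standard normal distribution -/
def stdGaussCDF (x : ℝ) : ℝ :=
  (Real.sqrt (2 * Real.pi))⁻¹ * ∫ u in Set.Iic x, Real.exp (-u ^ 2 / 2)

/-- the density of the standard normal distribution -/
def stdGaussPDF (x : ℝ) : ℝ :=
  (Real.sqrt (2 * Real.pi))⁻¹ * Real.exp (-x ^ 2 / 2)


/-- the denominator `D(q,w) = 1 − b(q,1,1,w) = Σ_{j≥0} (−1)^j w^j ∏_{i=1}^{j} q^{h_i}/(1−q^{h_i})` -/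
def DGF (t : ℕ) (q w : ℂ) : ℂ :=
  ∑' j : ℕ, (-1 : ℂ) ^ j * w ^ j * ∏ i ∈ Finset.Icc 1 j, q ^ hp t i / (1 - q ^ hp t i)


/-!
Splitting off the first factor `x₁ = q/(1-q)` of every product, where `xᵢ = q^{hᵢ}/(1-q^{hᵢ})`,
gives `D(q,w) = 1 - w x₁ E(q,w)` with `E(q,w) = Σ_k (-w)^k x₂ ⋯ x_{k+1}`. For `|q| ≤ 2/3` and
`i ≥ 2` we have `hᵢ ≥ t + 1`, so for `t ≥ 6` every `xᵢ` is at most `(2/3)^t` and `7/10`-Lipschitz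
in `q`; hence `E = 1 + O((2/3)^t)` and `E` is `7/5`-Lipschitz in `q`. Therefore `D(q,w) = 0` iff
`q = Φ_w(q) := 1/(1 + w E(q,w))`, and for `|w - 1| < 1/2 - 3(2/3)^t` the map `Φ_w` sends the
closed disc of radius `2/3` into its interior and is a `14/15`-contraction there. Its fixed point
is the uniform limit of the iterates `Φ_w^n(0)`, which are holomorphic in `w`, so it is
holomorphic in `w`. For `t = 5` the disc of the statement is empty.
-/

open Set Filter Metric Function
open scoped NNReal

theorem norm_prod_sub_prod_le {ι R : Type*} [NormedCommRing R] [NormOneClass R]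
    (s : Finset ι) (f g : ι → R) {M δ : ℝ}
    (hf : ∀ i ∈ s, ‖f i‖ ≤ M) (hg : ∀ i ∈ s, ‖g i‖ ≤ M) (hfg : ∀ i ∈ s, ‖f i - g i‖ ≤ δ) :
    ‖∏ i ∈ s, f i - ∏ i ∈ s, g i‖ ≤ s.card * M ^ (s.card - 1) * δ := by
  classical
  induction s using Finset.induction_on with
  | empty => simp
  | insert a s ha ih =>
    simp only [Finset.forall_mem_insert] at hf hg hfg
    have hM : 0 ≤ M := (norm_nonneg _).trans hf.1
    have hδ : 0 ≤ δ := (norm_nonneg _).trans hfg.1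
    have hgs : ‖∏ i ∈ s, g i‖ ≤ M ^ s.card :=
      (Finset.norm_prod_le _ _).trans <|
        (Finset.prod_le_prod (fun _ _ ↦ norm_nonneg _) hg.2).trans_eq (Finset.prod_const M)
    have hM_pow : M * (s.card * M ^ (s.card - 1)) = s.card * M ^ s.card := by
      cases s.card with
      | zero => simp
      | succ n => rw [Nat.add_sub_cancel, pow_succ]; push_cast; ring
    rw [Finset.prod_insert ha, Finset.prod_insert ha, Finset.card_insert_of_notMem ha,
      Nat.add_sub_cancel]
    calc ‖f a * ∏ i ∈ s, f i - g a * ∏ i ∈ s, g i‖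
        = ‖f a * (∏ i ∈ s, f i - ∏ i ∈ s, g i) + (f a - g a) * ∏ i ∈ s, g i‖ := by
          congr 1; ring
      _ ≤ M * (s.card * M ^ (s.card - 1) * δ) + δ * M ^ s.card := by
        refine (norm_add_le _ _).trans (add_le_add ?_ ?_) <;> refine (norm_mul_le _ _).trans ?_
        · exact mul_le_mul hf.1 (ih hf.2 hg.2 hfg.2) (norm_nonneg _) hM
        · exact mul_le_mul hfg.1 hgs (norm_nonneg _) hδ
      _ = ((s.card + 1 : ℕ) : ℝ) * M ^ s.card * δ := by
        rw [← mul_assoc, hM_pow]; push_cast; ring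

theorem norm_pow_sub_pow_le {R : Type*} [NormedCommRing R] [NormOneClass R] (a b : R) (n : ℕ)
    {M : ℝ} (ha : ‖a‖ ≤ M) (hb : ‖b‖ ≤ M) :
    ‖a ^ n - b ^ n‖ ≤ n * M ^ (n - 1) * ‖a - b‖ := by
  simpa using norm_prod_sub_prod_le (Finset.range n) (fun _ ↦ a) (fun _ ↦ b)
    (fun _ _ ↦ ha) (fun _ _ ↦ hb) (fun _ _ ↦ le_rfl)

theorem hasSum_coe_mul_pow_pred {𝕜 : Type*} [NormedField 𝕜] [CompleteSpace 𝕜] {r : 𝕜}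
    (hr : ‖r‖ < 1) : HasSum (fun k : ℕ ↦ k * r ^ (k - 1)) (1 / (1 - r) ^ 2) := by
  have h1r : 1 - r ≠ 0 := sub_ne_zero.2 fun h ↦ by simp [← h] at hr
  have h := (hasSum_coe_mul_geometric_of_norm_lt_one hr).add (hasSum_geometric_of_norm_lt_one hr)
  rw [show r / (1 - r) ^ 2 + (1 - r)⁻¹ = 1 / (1 - r) ^ 2 by field_simp; ring] at h
  rw [← hasSum_nat_add_iff' 1]
  simpa [add_mul] using h

theorem differentiableOn_iterate_apply {E : Type*} [NormedAddCommGroup E] [NormedSpace ℂ E]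
    {Φ : E → ℂ → E} {s : Set E} {U : Set ℂ} {x₀ : E} (hx₀ : x₀ ∈ s)
    (hmaps : ∀ w ∈ U, MapsTo (Φ · w) s s)
    (hdiff : ∀ f : ℂ → E, DifferentiableOn ℂ f U → MapsTo f U s →
      DifferentiableOn ℂ (fun w ↦ Φ (f w) w) U) (n : ℕ) :
    DifferentiableOn ℂ (fun w ↦ (Φ · w)^[n] x₀) U := by
  induction n with
  | zero => exact differentiableOn_const x₀
  | succ n ih =>
    simp only [iterate_succ_apply']
    exact hdiff _ ih fun w hw ↦ (hmaps w hw).iterate n hx₀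

theorem exists_differentiableOn_fixedPoint {E : Type*} [NormedAddCommGroup E] [NormedSpace ℂ E]
    [CompleteSpace E] {Φ : E → ℂ → E} {s : Set E} {U : Set ℂ} {K : ℝ≥0} {x₀ : E}
    (hU : IsOpen U) (hs : IsClosed s) (hsb : Bornology.IsBounded s) (hx₀ : x₀ ∈ s) (hK : K < 1)
    (hmaps : ∀ w ∈ U, MapsTo (Φ · w) s s) (hlip : ∀ w ∈ U, LipschitzOnWith K (Φ · w) s)
    (hdiff : ∀ f : ℂ → E, DifferentiableOn ℂ f U → MapsTo f U s →
      DifferentiableOn ℂ (fun w ↦ Φ (f w) w) U) :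
    ∃ p : ℂ → E, DifferentiableOn ℂ p U ∧
      ∀ w ∈ U, p w ∈ s ∧ Φ (p w) w = p w ∧ ∀ x ∈ s, Φ x w = x → x = p w := by
  have : CompleteSpace s := hs.completeSpace_coe
  have : Nonempty s := ⟨⟨x₀, hx₀⟩⟩
  have hc : ∀ w (hw : w ∈ U), ContractingWith K ((hmaps w hw).restrict _ s s) :=
    fun w hw ↦ ⟨hK, (hlip w hw).mapsToRestrict (hmaps w hw)⟩
  classical
  let p : ℂ → E := fun w ↦ if hw : w ∈ U then (ContractingWith.fixedPoint _ (hc w hw)).1 else x₀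
  have hp_eq : ∀ w (hw : w ∈ U), p w = (ContractingWith.fixedPoint _ (hc w hw)).1 :=
    fun w hw ↦ dif_pos hw
  have hdist : ∀ n, ∀ w ∈ U, dist ((Φ · w)^[n] x₀) (p w) ≤ diam s * K ^ n / (1 - K) := by
    intro n w hw
    have h := (hc w hw).apriori_dist_iterate_fixedPoint_le ⟨x₀, hx₀⟩ n
    rw [Subtype.dist_eq, MapsTo.coe_iterate_restrict, ← hp_eq w hw, Subtype.dist_eq] at h
    refine h.trans ?_
    gcongr
    · exact (sub_pos.2 (by exact_mod_cast hK)).le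
    · exact dist_le_diam_of_mem hsb hx₀ (hmaps w hw hx₀)
  have hbound : Tendsto (fun n : ℕ ↦ diam s * K ^ n / (1 - K)) atTop (nhds 0) := by
    simpa using ((tendsto_pow_atTop_nhds_zero_of_lt_one K.2 hK).const_mul (diam s)).div_const
      (1 - (K : ℝ))
  have hunif : TendstoUniformlyOn (fun n w ↦ (Φ · w)^[n] x₀) p atTop U := by
    refine Metric.tendstoUniformlyOn_iff.2 fun ε hε ↦ ?_
    filter_upwards [hbound.eventually (gt_mem_nhds hε)] with n hn w hw
    rw [dist_comm]
    exact (hdist n w hw).trans_lt hn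
  refine ⟨p, hunif.tendstoLocallyUniformlyOn.differentiableOn
    (.of_forall (differentiableOn_iterate_apply hx₀ hmaps hdiff)) hU,
    fun w hw ↦ ⟨?_, ?_, fun x hx hfix ↦ ?_⟩⟩
  · rw [hp_eq w hw]
    exact Subtype.prop _
  · rw [hp_eq w hw]
    exact congrArg Subtype.val (hc w hw).fixedPoint_isFixedPt
  · rw [hp_eq w hw, ← (hc w hw).fixedPoint_unique (x := ⟨x, hx⟩) (Subtype.ext hfix)]

lemma hp_one (t : ℕ) : hp t 1 = 1 := by simp [hp]

lemma succ_le_hp (t : ℕ) {i : ℕ} (hi : 2 ≤ i) : t + 1 ≤ hp t i :=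
  calc t + 1 = ∑ k ∈ Finset.range 2, t ^ k := by simp [Finset.sum_range_succ, add_comm]
    _ ≤ hp t i := Finset.sum_le_sum_of_subset (Finset.range_subset_range.mpr hi)

lemma mul_two_thirds_pow_pred_le {n : ℕ} (hn : 7 ≤ n) :
    (n : ℝ) * (2 / 3) ^ (n - 1) ≤ 7 * (2 / 3) ^ 6 := by
  induction n, hn using Nat.le_induction with
  | base => norm_num
  | succ n hn ih =>
    obtain ⟨m, rfl⟩ : ∃ m, n = m + 1 := ⟨n - 1, by omega⟩
    have hm : (6 : ℝ) ≤ m := by exact_mod_cast (by omega : 6 ≤ m)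
    refine le_trans ?_ ih
    simp only [Nat.add_sub_cancel, pow_succ]
    push_cast
    nlinarith [pow_pos (by norm_num : (0 : ℝ) < 2 / 3) m]

def hpRatio (t : ℕ) (q : ℂ) (i : ℕ) : ℂ := q ^ hp t i / (1 - q ^ hp t i)

def hpProd (t : ℕ) (q : ℂ) (k : ℕ) : ℂ := ∏ i ∈ Finset.Icc 2 (k + 1), hpRatio t q i

def dgfTail (t : ℕ) (q w : ℂ) : ℂ := ∑' k : ℕ, (-w) ^ k * hpProd t q k

def rootMap (t : ℕ) (q w : ℂ) : ℂ := (1 + w * dgfTail t q w)⁻¹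

/-- The margin `3 (2/3)^t` absorbs `‖w (dgfTail t q w - 1)‖ ≤ 21/8 (2/3)^t`, so that
`‖1 + w dgfTail t q w‖ > 3/2` on this disc. -/
def rootDisc (t : ℕ) : Set ℂ := ball 1 (1 / 2 - 3 * (2 / 3) ^ t)

section
variable {t : ℕ}

lemma two_thirds_pow_le (ht : 6 ≤ t) : (2 / 3 : ℝ) ^ t ≤ 64 / 729 :=
  (pow_le_pow_of_le_one (by norm_num) (by norm_num) ht).trans_eq (by norm_num)

lemma three_halves_mul_two_thirds_pow_lt_one (ht : 6 ≤ t) : 3 / 2 * (2 / 3 : ℝ) ^ t < 1 := by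
  linarith [two_thirds_pow_le ht]

lemma norm_pow_hp_le {q : ℂ} (hq : ‖q‖ ≤ 2 / 3) {i : ℕ} (hi : 2 ≤ i) :
    ‖q ^ hp t i‖ ≤ 2 / 3 * (2 / 3) ^ t := by
  rw [norm_pow, ← pow_succ']
  exact (pow_le_pow_left₀ (norm_nonneg q) hq _).trans
    (pow_le_pow_of_le_one (by norm_num) (by norm_num) (succ_le_hp t hi))

lemma norm_one_sub_pow_hp_ge (ht : 6 ≤ t) {q : ℂ} (hq : ‖q‖ ≤ 2 / 3) {i : ℕ} (hi : 2 ≤ i) :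
    16 / 17 ≤ ‖1 - q ^ hp t i‖ := by
  have h := norm_sub_norm_le (1 : ℂ) (q ^ hp t i)
  rw [norm_one] at h
  linarith [norm_pow_hp_le (t := t) hq hi, two_thirds_pow_le ht]

lemma norm_hpRatio_le (ht : 6 ≤ t) {q : ℂ} (hq : ‖q‖ ≤ 2 / 3) {i : ℕ} (hi : 2 ≤ i) :
    ‖hpRatio t q i‖ ≤ (2 / 3) ^ t := by
  rw [hpRatio, norm_div, div_le_iff₀ (by linarith [norm_one_sub_pow_hp_ge ht hq hi])]
  nlinarith [norm_pow_hp_le (t := t) hq hi, norm_one_sub_pow_hp_ge ht hq hi,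
    pow_pos (by norm_num : (0 : ℝ) < 2 / 3) t]

lemma norm_hpRatio_sub_le (ht : 6 ≤ t) {q q' : ℂ} (hq : ‖q‖ ≤ 2 / 3) (hq' : ‖q'‖ ≤ 2 / 3)
    {i : ℕ} (hi : 2 ≤ i) : ‖hpRatio t q i - hpRatio t q' i‖ ≤ 7 / 10 * ‖q - q'‖ := by
  have hd := norm_one_sub_pow_hp_ge ht hq hi
  have hd' := norm_one_sub_pow_hp_ge ht hq' hi
  have hne : 1 - q ^ hp t i ≠ 0 := norm_pos_iff.1 (by linarith)
  have hne' : 1 - q' ^ hp t i ≠ 0 := norm_pos_iff.1 (by linarith)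
  have hnum : ‖q ^ hp t i - q' ^ hp t i‖ ≤ 448 / 729 * ‖q - q'‖ :=
    (norm_pow_sub_pow_le q q' _ hq hq').trans (mul_le_mul_of_nonneg_right
      ((mul_two_thirds_pow_pred_le (by linarith [succ_le_hp t hi])).trans_eq (by norm_num))
      (norm_nonneg _))
  have hsub : hpRatio t q i - hpRatio t q' i
      = (q ^ hp t i - q' ^ hp t i) / ((1 - q ^ hp t i) * (1 - q' ^ hp t i)) := by
    rw [hpRatio, hpRatio]
    field_simp
    ring
  rw [hsub, norm_div, norm_mul, div_le_iff₀ (by positivity)]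
  nlinarith [mul_le_mul hd hd' (by norm_num) (norm_nonneg _), norm_nonneg (q - q')]

lemma hpProd_zero (q : ℂ) : hpProd t q 0 = 1 := by simp [hpProd]

lemma norm_hpProd_le (ht : 6 ≤ t) {q : ℂ} (hq : ‖q‖ ≤ 2 / 3) (k : ℕ) :
    ‖hpProd t q k‖ ≤ ((2 / 3) ^ t) ^ k :=
  (Finset.norm_prod_le _ _).trans <| (Finset.prod_le_prod (fun _ _ ↦ norm_nonneg _)
    fun _ hi ↦ norm_hpRatio_le ht hq (Finset.mem_Icc.1 hi).1).trans_eq (by simp)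

lemma norm_hpProd_sub_le (ht : 6 ≤ t) {q q' : ℂ} (hq : ‖q‖ ≤ 2 / 3) (hq' : ‖q'‖ ≤ 2 / 3)
    (k : ℕ) :
    ‖hpProd t q k - hpProd t q' k‖ ≤ k * ((2 / 3) ^ t) ^ (k - 1) * (7 / 10 * ‖q - q'‖) := by
  simpa [hpProd] using norm_prod_sub_prod_le (Finset.Icc 2 (k + 1)) (hpRatio t q) (hpRatio t q')
    (fun _ hi ↦ norm_hpRatio_le ht hq (Finset.mem_Icc.1 hi).1)
    (fun _ hi ↦ norm_hpRatio_le ht hq' (Finset.mem_Icc.1 hi).1)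
    (fun _ hi ↦ norm_hpRatio_sub_le ht hq hq' (Finset.mem_Icc.1 hi).1)

lemma norm_neg_pow_mul_hpProd_le (ht : 6 ≤ t) {q w : ℂ} (hq : ‖q‖ ≤ 2 / 3) (hw : ‖w‖ ≤ 3 / 2)
    (k : ℕ) : ‖(-w) ^ k * hpProd t q k‖ ≤ (3 / 2 * (2 / 3) ^ t) ^ k := by
  rw [norm_mul, norm_pow, norm_neg, mul_pow]
  exact mul_le_mul (pow_le_pow_left₀ (norm_nonneg w) hw k) (norm_hpProd_le ht hq k)
    (norm_nonneg _) (by positivity)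

lemma summable_neg_pow_mul_hpProd (ht : 6 ≤ t) {q w : ℂ} (hq : ‖q‖ ≤ 2 / 3)
    (hw : ‖w‖ ≤ 3 / 2) : Summable fun k ↦ (-w) ^ k * hpProd t q k :=
  .of_norm_bounded (summable_geometric_of_lt_one (by positivity)
    (three_halves_mul_two_thirds_pow_lt_one ht)) (norm_neg_pow_mul_hpProd_le ht hq hw)

lemma norm_dgfTail_sub_one_le (ht : 6 ≤ t) {q w : ℂ} (hq : ‖q‖ ≤ 2 / 3) (hw : ‖w‖ ≤ 3 / 2) :
    ‖dgfTail t q w - 1‖ ≤ 7 / 4 * (2 / 3) ^ t := by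
  have hr := three_halves_mul_two_thirds_pow_lt_one ht
  have hε := two_thirds_pow_le ht
  rw [dgfTail, (summable_neg_pow_mul_hpProd ht hq hw).tsum_eq_zero_add, pow_zero, hpProd_zero,
    one_mul, add_sub_cancel_left]
  refine (tsum_of_norm_bounded ((hasSum_geometric_of_lt_one (by positivity) hr).mul_left _)
    fun k ↦ (norm_neg_pow_mul_hpProd_le ht hq hw (k + 1)).trans_eq (pow_succ' _ k)).trans ?_
  rw [← div_eq_mul_inv, div_le_iff₀ (by linarith)]
  nlinarith [pow_pos (by norm_num : (0 : ℝ) < 2 / 3) t]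

lemma norm_dgfTail_sub_le (ht : 6 ≤ t) {q q' w : ℂ} (hq : ‖q‖ ≤ 2 / 3) (hq' : ‖q'‖ ≤ 2 / 3)
    (hw : ‖w‖ ≤ 3 / 2) : ‖dgfTail t q w - dgfTail t q' w‖ ≤ 7 / 5 * ‖q - q'‖ := by
  have hε := two_thirds_pow_le ht
  have hr : ‖(3 / 2 * (2 / 3) ^ t : ℝ)‖ < 1 := by
    rw [Real.norm_of_nonneg (by positivity)]
    exact three_halves_mul_two_thirds_pow_lt_one ht
  have hbound : ∀ k, ‖(-w) ^ k * hpProd t q k - (-w) ^ k * hpProd t q' k‖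
      ≤ 21 / 20 * ‖q - q'‖ * (k * (3 / 2 * (2 / 3) ^ t) ^ (k - 1)) := by
    rintro (_ | k)
    · simp [hpProd_zero]
    rw [← mul_sub, norm_mul, norm_pow, norm_neg]
    calc ‖w‖ ^ (k + 1) * ‖hpProd t q (k + 1) - hpProd t q' (k + 1)‖
        ≤ (3 / 2) ^ (k + 1) * ((k + 1 : ℕ) * ((2 / 3) ^ t) ^ k * (7 / 10 * ‖q - q'‖)) :=
          mul_le_mul (pow_le_pow_left₀ (norm_nonneg w) hw _) (norm_hpProd_sub_le ht hq hq' _)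
            (norm_nonneg _) (by positivity)
      _ = 21 / 20 * ‖q - q'‖ * ((k + 1 : ℕ) * (3 / 2 * (2 / 3) ^ t) ^ (k + 1 - 1)) := by
          rw [Nat.add_sub_cancel, mul_pow]
          ring
  rw [dgfTail, dgfTail, ← (summable_neg_pow_mul_hpProd ht hq hw).tsum_sub
    (summable_neg_pow_mul_hpProd ht hq' hw)]
  refine (tsum_of_norm_bounded ((hasSum_coe_mul_pow_pred hr).mul_left _) hbound).trans ?_
  have h1r : (211 / 243 : ℝ) ≤ 1 - 3 / 2 * (2 / 3) ^ t := by linarith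
  rw [mul_one_div, div_le_iff₀ (by positivity)]
  nlinarith [norm_nonneg (q - q'), mul_le_mul h1r h1r (by norm_num) (by linarith)]

lemma DGF_term_succ (q w : ℂ) (j : ℕ) :
    (-1 : ℂ) ^ (j + 1) * w ^ (j + 1) * ∏ i ∈ Finset.Icc 1 (j + 1), q ^ hp t i / (1 - q ^ hp t i)
      = -(w * (q / (1 - q))) * ((-w) ^ j * hpProd t q j) := by
  rw [← Finset.insert_Icc_add_one_left_eq_Icc (by omega), Finset.prod_insert (by simp), hp_one,
    pow_one, hpProd, neg_pow w]
  simp only [hpRatio]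
  ring_nf

lemma DGF_eq_one_sub_mul_dgfTail (ht : 6 ≤ t) {q w : ℂ} (hq : ‖q‖ ≤ 2 / 3) (hw : ‖w‖ ≤ 3 / 2) :
    DGF t q w = 1 - w * (q / (1 - q)) * dgfTail t q w := by
  have hs := (summable_neg_pow_mul_hpProd ht hq hw).mul_left (-(w * (q / (1 - q))))
  rw [DGF, ((summable_nat_add_iff 1).1 (by simpa only [DGF_term_succ] using hs)).tsum_eq_zero_add]
  simp only [DGF_term_succ, tsum_mul_left, dgfTail]
  simp only [pow_zero, mul_one, Order.lt_one_iff, Finset.Icc_eq_empty_of_lt, Finset.prod_empty]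
  ring

lemma norm_le_three_halves_of_mem_rootDisc {w : ℂ} (hw : w ∈ rootDisc t) : ‖w‖ ≤ 3 / 2 := by
  have h := norm_le_norm_add_norm_sub' w 1
  rw [norm_one, ← dist_eq_norm] at h
  linarith [mem_ball.1 hw, pow_pos (by norm_num : (0 : ℝ) < 2 / 3) t]

lemma three_halves_lt_norm_one_add_mul_dgfTail (ht : 6 ≤ t) {q w : ℂ} (hq : ‖q‖ ≤ 2 / 3)
    (hw : w ∈ rootDisc t) : 3 / 2 < ‖1 + w * dgfTail t q w‖ := by
  have hw' := norm_le_three_halves_of_mem_rootDisc hw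
  have hw1 : ‖w - 1‖ < 1 / 2 - 3 * (2 / 3) ^ t := by rw [← dist_eq_norm]; exact mem_ball.1 hw
  have hwE : ‖w * (dgfTail t q w - 1)‖ ≤ 3 / 2 * (7 / 4 * (2 / 3) ^ t) := by
    rw [norm_mul]
    exact mul_le_mul hw' (norm_dgfTail_sub_one_le ht hq hw') (norm_nonneg _) (by norm_num)
  have h2 : ‖(2 : ℂ)‖ ≤ ‖1 + w * dgfTail t q w‖ + ‖w - 1‖ + ‖w * (dgfTail t q w - 1)‖ :=
    calc ‖(2 : ℂ)‖ = ‖(1 + w * dgfTail t q w) - (w - 1) - w * (dgfTail t q w - 1)‖ := by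
          congr 1; ring
      _ ≤ _ := (norm_sub_le _ _).trans (add_le_add_left (norm_sub_le _ _) _)
  rw [Complex.norm_two] at h2
  linarith [pow_pos (by norm_num : (0 : ℝ) < 2 / 3) t]

lemma one_add_mul_dgfTail_ne_zero (ht : 6 ≤ t) {q w : ℂ} (hq : ‖q‖ ≤ 2 / 3)
    (hw : w ∈ rootDisc t) : 1 + w * dgfTail t q w ≠ 0 :=
  norm_pos_iff.1 (by linarith [three_halves_lt_norm_one_add_mul_dgfTail ht hq hw])

lemma norm_rootMap_lt (ht : 6 ≤ t) {q w : ℂ} (hq : ‖q‖ ≤ 2 / 3) (hw : w ∈ rootDisc t) :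
    ‖rootMap t q w‖ < 2 / 3 := by
  rw [rootMap, norm_inv]
  calc ‖1 + w * dgfTail t q w‖⁻¹ < (3 / 2)⁻¹ :=
        inv_strictAnti₀ (by norm_num) (three_halves_lt_norm_one_add_mul_dgfTail ht hq hw)
    _ = 2 / 3 := by norm_num

lemma lipschitzOnWith_rootMap (ht : 6 ≤ t) {w : ℂ} (hw : w ∈ rootDisc t) :
    LipschitzOnWith (14 / 15) (rootMap t · w) (closedBall 0 (2 / 3)) := by
  refine LipschitzOnWith.of_dist_le_mul fun q hq q' hq' ↦ ?_
  rw [mem_closedBall_zero_iff] at hq hq'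
  have hw' := norm_le_three_halves_of_mem_rootDisc hw
  have hA := three_halves_lt_norm_one_add_mul_dgfTail ht hq hw
  have hA' := three_halves_lt_norm_one_add_mul_dgfTail ht hq' hw
  have hwE : ‖w * (dgfTail t q' w - dgfTail t q w)‖ ≤ 3 / 2 * (7 / 5 * ‖q - q'‖) := by
    rw [norm_mul, norm_sub_rev q q']
    exact mul_le_mul hw' (norm_dgfTail_sub_le ht hq' hq hw') (norm_nonneg _) (by norm_num)
  rw [dist_eq_norm, dist_eq_norm, rootMap, rootMap, inv_sub_inv
    (one_add_mul_dgfTail_ne_zero ht hq hw) (one_add_mul_dgfTail_ne_zero ht hq' hw),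
    show 1 + w * dgfTail t q' w - (1 + w * dgfTail t q w)
      = w * (dgfTail t q' w - dgfTail t q w) by ring,
    norm_div, norm_mul (1 + _), div_le_iff₀ (by positivity)]
  push_cast
  nlinarith [mul_le_mul hA.le hA'.le (by norm_num) (norm_nonneg _), norm_nonneg (q - q')]

lemma DGF_eq_zero_iff (ht : 6 ≤ t) {q w : ℂ} (hq : ‖q‖ ≤ 2 / 3) (hw : w ∈ rootDisc t) :
    DGF t q w = 0 ↔ rootMap t q w = q := by
  have h1q : 1 - q ≠ 0 := by
    rw [sub_ne_zero]
    rintro rfl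
    norm_num at hq
  rw [DGF_eq_one_sub_mul_dgfTail ht hq (norm_le_three_halves_of_mem_rootDisc hw), rootMap,
    show 1 - w * (q / (1 - q)) * dgfTail t q w = (1 - q * (1 + w * dgfTail t q w)) / (1 - q) by
      field_simp; ring,
    div_eq_zero_iff, or_iff_left h1q, sub_eq_zero, eq_comm,
    mul_eq_one_iff_eq_inv₀ (one_add_mul_dgfTail_ne_zero ht hq hw), eq_comm]

lemma differentiableOn_hpRatio_comp (ht : 6 ≤ t) {f : ℂ → ℂ} {U : Set ℂ}
    (hf : DifferentiableOn ℂ f U) (hfU : MapsTo f U (closedBall 0 (2 / 3))) {i : ℕ}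
    (hi : 2 ≤ i) : DifferentiableOn ℂ (fun w ↦ hpRatio t (f w) i) U :=
  (hf.pow _).div ((differentiableOn_const 1).sub (hf.pow _)) fun w hw ↦ norm_pos_iff.1 <| by
    linarith [norm_one_sub_pow_hp_ge ht (mem_closedBall_zero_iff.1 (hfU hw)) hi]

lemma differentiableOn_dgfTail_comp (ht : 6 ≤ t) {f : ℂ → ℂ} {U : Set ℂ} (hU : IsOpen U)
    (hUw : ∀ w ∈ U, ‖w‖ ≤ 3 / 2) (hf : DifferentiableOn ℂ f U)
    (hfU : MapsTo f U (closedBall 0 (2 / 3))) :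
    DifferentiableOn ℂ (fun w ↦ dgfTail t (f w) w) U := by
  have hunif := tendstoUniformlyOn_tsum (summable_geometric_of_lt_one (by positivity)
    (three_halves_mul_two_thirds_pow_lt_one ht))
    fun k w hw ↦ norm_neg_pow_mul_hpProd_le ht (mem_closedBall_zero_iff.1 (hfU hw)) (hUw w hw) k
  refine hunif.tendstoLocallyUniformlyOn.differentiableOn (.of_forall fun s ↦ ?_) hU
  exact .fun_sum fun k _ ↦ (differentiableOn_id.neg.pow k).mul
    (.fun_finsetProd fun i hi ↦ differentiableOn_hpRatio_comp ht hf hfU (Finset.mem_Icc.1 hi).1)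

lemma differentiableOn_rootMap_comp (ht : 6 ≤ t) {f : ℂ → ℂ}
    (hf : DifferentiableOn ℂ f (rootDisc t)) (hfU : MapsTo f (rootDisc t) (closedBall 0 (2 / 3))) :
    DifferentiableOn ℂ (fun w ↦ rootMap t (f w) w) (rootDisc t) :=
  ((differentiableOn_const 1).fun_add (differentiableOn_id.fun_mul
    (differentiableOn_dgfTail_comp ht isOpen_ball
      (fun _ ↦ norm_le_three_halves_of_mem_rootDisc) hf hfU))).fun_inv
    fun _ hw ↦ one_add_mul_dgfTail_ne_zero ht (mem_closedBall_zero_iff.1 (hfU hw)) hw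

end

/-- For `t ≥ 5`, on the disc `{w : |w − 1| ≤ 1/2 − 5·(2/3)^t}` the
implicitly defined root `q₀(w)` of `D(q₀(w), w) = 0` with `|q₀(w)| < 2/3` (which exists
and is unique) is analytic in `w`. -/
theorem implicit_root_analytic (t : ℕ) (ht : 5 ≤ t) :
    ∃ q₀ : ℂ → ℂ,
      (∀ w ∈ Metric.closedBall (1 : ℂ) (1/2 - 5 * (2/3 : ℝ) ^ t),
        ‖q₀ w‖ < 2/3 ∧ DGF t (q₀ w) w = 0 ∧
        ∀ q : ℂ, ‖q‖ < 2/3 → DGF t q w = 0 → q = q₀ w) ∧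
      AnalyticOn ℂ q₀ (Metric.closedBall (1 : ℂ) (1/2 - 5 * (2/3 : ℝ) ^ t)) := by
  obtain rfl | ht6 := ht.eq_or_lt
  · rw [closedBall_eq_empty.2 (by norm_num)]
    exact ⟨fun _ ↦ 0, fun _ h ↦ h.elim, analyticOn_empty⟩
  have hsub : closedBall (1 : ℂ) (1/2 - 5 * (2/3 : ℝ) ^ t) ⊆ rootDisc t :=
    closedBall_subset_ball (by linarith [pow_pos (by norm_num : (0 : ℝ) < 2 / 3) t])
  obtain ⟨p, hp_diff, hp_fixedPoint⟩ :=
    exists_differentiableOn_fixedPoint (Φ := rootMap t) (K := 14 / 15)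
      isOpen_ball isClosed_closedBall isBounded_closedBall (mem_closedBall_self (by norm_num))
      (by rw [← NNReal.coe_lt_coe]; norm_num)
      (fun _ hw _ hq ↦ mem_closedBall_zero_iff.2
        (norm_rootMap_lt ht6 (mem_closedBall_zero_iff.1 hq) hw).le)
      (fun _ ↦ lipschitzOnWith_rootMap ht6) (fun _ ↦ differentiableOn_rootMap_comp ht6)
  refine ⟨p, fun w hw ↦ ?_, (hp_diff.analyticOnNhd isOpen_ball).analyticOn.mono hsub⟩
  obtain ⟨hp_mem, hp_fix, hp_unique⟩ := hp_fixedPoint w (hsub hw)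
  have hp_norm := mem_closedBall_zero_iff.1 hp_mem
  exact ⟨hp_fix ▸ norm_rootMap_lt ht6 hp_norm (hsub hw),
    (DGF_eq_zero_iff ht6 hp_norm (hsub hw)).2 hp_fix,
    fun q hq hD ↦ hp_unique q (mem_closedBall_zero_iff.2 hq.le)
      ((DGF_eq_zero_iff ht6 hq.le (hsub hw)).1 hD)⟩

end
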